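/- Let m ≥ 2, let k(z) = z + ∑_{n≥2} k_n z^n be bi-univalent with k₂ ≠ 0 and k₃ ≠ 0, and let f(z) = z + ∑_{n≥2} a_n z^n belong to the class BR^k(m; 0). Then |a₂| ≤ min{ √(m/|k₃|) , m/|k₂| }, |a₃| ≤ m/|k₃|, and |2a₂² − a₃| ≤ m/|k₃|. -/

import Mathlib

open MeasureTheory Set Metric Complex

noncomputable section

/-- The `n`-th MacLaurin coefficient of `f`, i.e. `f⁽ⁿ⁾(0)/n!`. -/
def mc (f : ℂ → ℂ) (n : ℕ) : ℂ := iteratedDeriv n f 0 / (n.factorial : ℂ)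

/-- The open unit disk in `ℂ`. -/
def unitDisk : Set ℂ := Metric.ball (0 : ℂ) 1

/-- The kernel `(1 - z e^{it})/(1 + z e^{it})`. -/
def pmKernel (z : ℂ) (t : ℝ) : ℂ :=
  (1 - z * Complex.exp (t * Complex.I)) / (1 + z * Complex.exp (t * Complex.I))

/-- The class `P_m` of functions with bounded boundary rotation: `p` is analytic on the unit
disk, `p 0 = 1`, and `p` is represented against a finite signed Borel measure
`μ = μp - μn` on `[0, 2π]` with `μ([0,2π]) = 1` and total variation `‖μ‖ ≤ m/2`. -/
def MemPm (m : ℝ) (p : ℂ → ℂ) : Prop :=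
  AnalyticOnNhd ℂ p unitDisk ∧ p 0 = 1 ∧
  ∃ μp μn : Measure ℝ, IsFiniteMeasure μp ∧ IsFiniteMeasure μn ∧
    (μp (Set.Icc 0 (2 * Real.pi))).toReal - (μn (Set.Icc 0 (2 * Real.pi))).toReal = 1 ∧
    (μp (Set.Icc 0 (2 * Real.pi))).toReal + (μn (Set.Icc 0 (2 * Real.pi))).toReal ≤ m / 2 ∧
    ∀ z ∈ unitDisk, p z =
      (∫ t in Set.Icc 0 (2 * Real.pi), pmKernel z t ∂μp) -
      (∫ t in Set.Icc 0 (2 * Real.pi), pmKernel z t ∂μn)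

/-- `p ∈ P_m(β)` iff `p = β + (1 - β) q` on the unit disk for some `q ∈ P_m`. -/
def MemPmBeta (m β : ℝ) (p : ℂ → ℂ) : Prop :=
  ∃ q : ℂ → ℂ, MemPm m q ∧ ∀ z ∈ unitDisk, p z = (β : ℂ) + (1 - (β : ℂ)) * q z

/-- `f` and `g` form a bi-univalent pair: `f` is analytic and injective on the unit disk with
`f 0 = 0`, `f' 0 = 1`, and `g` is the univalent analytic continuation of `f⁻¹` to the unit
disk: `g` is analytic and injective on the unit disk, `g 0 = 0`, and `f (g w) = w` for
`|w| < 1/4`. -/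
def BiUnivalentPair (f g : ℂ → ℂ) : Prop :=
  AnalyticOnNhd ℂ f unitDisk ∧ f 0 = 0 ∧ deriv f 0 = 1 ∧ Set.InjOn f unitDisk ∧
  AnalyticOnNhd ℂ g unitDisk ∧ Set.InjOn g unitDisk ∧ g 0 = 0 ∧
  ∀ w : ℂ, ‖w‖ < 1 / 4 → f (g w) = w

/-- MacLaurin coefficients of `(f ∗ k)(z)/z`: the constant term is `1` and the coefficient of
`z^n` for `n ≥ 1` is `a_{n+1} k_{n+1}`. -/
def brCoeff (f k : ℂ → ℂ) (n : ℕ) : ℂ := if n = 0 then 1 else mc f (n + 1) * mc k (n + 1)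

/-- The function `Φ(z) = 1 + ∑_{n≥2} a_n k_n z^{n-1}`, i.e. `(f ∗ k)(z)/z`. -/
def brFun (f k : ℂ → ℂ) (z : ℂ) : ℂ := ∑' n : ℕ, brCoeff f k n * z ^ n

/-- `f ∈ BR^k(m; β)`: `f` is bi-univalent with inverse `g`, and the series
`Φ(z) = 1 + ∑_{n≥2} a_n k_n z^{n-1}` and `Ψ(w) = 1 + ∑_{n≥2} b_n k_n w^{n-1}` converge on
the unit disk and define functions of class `P_m(β)`. -/
def MemBR (m β : ℝ) (k f g : ℂ → ℂ) : Prop :=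
  BiUnivalentPair f g ∧
  (∀ z ∈ unitDisk, Summable fun n : ℕ => brCoeff f k n * z ^ n) ∧
  (∀ w ∈ unitDisk, Summable fun n : ℕ => brCoeff g k n * w ^ n) ∧
  MemPmBeta m β (brFun f k) ∧ MemPmBeta m β (brFun g k)

/-!
Expanding the kernel `(1 - w)/(1 + w) = 1 + ∑_{n ≥ 1} 2 (-1)ⁿ wⁿ` under the integral shows that
the `n`-th coefficient of a `P_m` function is `2 (-1)ⁿ ∫ e^{int} dμ`, of modulus at most
`2 ‖μ‖ ≤ m`. For `Φ` and `Ψ` this bounds `|a₂ k₂|`, `|a₃ k₃|` and `|b₃ k₃|`, where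
`b₃ = 2 a₂² - a₃` is read off by differentiating `f (g w) = w` three times at `0`.
Finally `2 a₂² = a₃ + b₃` gives `|a₂|² ≤ m / |k₃|`.
-/

open Filter Topology

lemma hasFPowerSeriesAt_ofScalars_of_hasSum {a : ℕ → ℂ} {F : ℂ → ℂ} {r : ℝ} (hr : 0 < r)
    (ha : ∀ z ∈ ball (0 : ℂ) r, HasSum (fun n => a n * z ^ n) (F z)) :
    HasFPowerSeriesAt F (FormalMultilinearSeries.ofScalars ℂ a) 0 := by
  set z₀ : ℂ := ((r / 2 : ℝ) : ℂ)
  have hz₀ : ‖z₀‖ = r / 2 := by simp [z₀, abs_of_pos hr]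
  have hball : ∀ z : ℂ, ‖z‖ ≤ ‖z₀‖ → z ∈ ball (0 : ℂ) r := fun z hz =>
    mem_ball_zero_iff.mpr (by linarith)
  have hz₀_le : (‖z₀‖₊ : ENNReal) ≤ (FormalMultilinearSeries.ofScalars ℂ a).radius := by
    refine FormalMultilinearSeries.le_radius_of_tendsto _ (l := 0) ?_
    have := (ha z₀ (hball _ le_rfl)).summable.tendsto_atTop_zero.norm
    simpa [FormalMultilinearSeries.ofScalars_norm, norm_mul, norm_pow] using this
  refine ⟨‖z₀‖₊, ⟨hz₀_le, by simp [← NNReal.coe_pos, hz₀, hr], fun {y} hy => ?_⟩⟩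
  simp only [FormalMultilinearSeries.ofScalars_apply_eq, smul_eq_mul, zero_add]
  refine ha y (hball y (le_of_lt ?_))
  simpa [edist_zero_right, ← ENNReal.coe_lt_coe] using hy

lemma coeff_unique_of_hasSum {a b : ℕ → ℂ} {F : ℂ → ℂ} {r : ℝ} (hr : 0 < r)
    (ha : ∀ z ∈ ball (0 : ℂ) r, HasSum (fun n => a n * z ^ n) (F z))
    (hb : ∀ z ∈ ball (0 : ℂ) r, HasSum (fun n => b n * z ^ n) (F z)) : a = b :=
  (FormalMultilinearSeries.ofScalars_series_eq_iff ℂ a b).mp <|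
    (hasFPowerSeriesAt_ofScalars_of_hasSum hr ha).eq_formalMultilinearSeries
      (hasFPowerSeriesAt_ofScalars_of_hasSum hr hb)

def kernelCoeff (n : ℕ) : ℂ := if n = 0 then 1 else 2 * (-1) ^ n

lemma norm_kernelCoeff_le (n : ℕ) : ‖kernelCoeff n‖ ≤ 2 := by
  unfold kernelCoeff
  split_ifs <;> norm_num

lemma hasSum_kernelCoeff {w : ℂ} (hw : ‖w‖ < 1) :
    HasSum (fun n => kernelCoeff n * w ^ n) ((1 - w) / (1 + w)) := by
  have hw' : 1 + w ≠ 0 := fun h => by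
    rw [eq_neg_of_add_eq_zero_right h, norm_neg, norm_one] at hw
    exact lt_irrefl _ hw
  have hgeom := ((hasSum_geometric_of_norm_lt_one (show ‖-w‖ < 1 by rwa [norm_neg])).mul_left
    2).sub (hasSum_ite_eq 0 (1 : ℂ))
  have hcoeff : (fun n => kernelCoeff n * w ^ n) =
      fun n => 2 * (-w) ^ n - if n = 0 then 1 else 0 := by
    funext n
    rcases eq_or_ne n 0 with rfl | hn
    · norm_num [kernelCoeff]
    · rw [kernelCoeff, if_neg hn, if_neg hn, neg_pow, sub_zero]
      ring
  have hsum : (1 - w) / (1 + w) = 2 * (1 - -w)⁻¹ - 1 := by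
    rw [sub_neg_eq_add]
    field_simp
    ring
  rwa [hcoeff, hsum]

lemma hasSum_pmKernel {z : ℂ} (hz : ‖z‖ < 1) (t : ℝ) :
    HasSum (fun n => kernelCoeff n * exp (t * I) ^ n * z ^ n) (pmKernel z t) := by
  have hw : ‖z * exp (t * I)‖ < 1 := by rwa [norm_mul, norm_exp_ofReal_mul_I, mul_one]
  simpa only [pmKernel, mul_pow, mul_comm (z ^ _), mul_assoc] using hasSum_kernelCoeff hw

lemma hasSum_integral_pmKernel (ν : Measure ℝ) [IsFiniteMeasure ν] {z : ℂ} (hz : ‖z‖ < 1) :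
    HasSum (fun n => kernelCoeff n * (∫ t, exp (t * I) ^ n ∂ν) * z ^ n)
      (∫ t, pmKernel z t ∂ν) := by
  have hterm : ∀ n (t : ℝ), ‖kernelCoeff n * exp (t * I) ^ n * z ^ n‖ ≤ 2 * ‖z‖ ^ n := fun n t => by
    rw [norm_mul, norm_mul, norm_pow, norm_pow, norm_exp_ofReal_mul_I, one_pow, mul_one]
    gcongr
    exact norm_kernelCoeff_le n
  have hdom := hasSum_integral_of_dominated_convergence (μ := ν) (fun n _ => 2 * ‖z‖ ^ n)
    (fun n => by fun_prop) (fun n => ae_of_all _ (hterm n))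
    (ae_of_all _ fun _ => (summable_geometric_of_lt_one (norm_nonneg z) hz).mul_left 2)
    (integrable_const _) (ae_of_all _ (hasSum_pmKernel hz))
  simpa only [integral_mul_const, integral_const_mul] using hdom

lemma norm_integral_exp_mul_I_pow_le (ν : Measure ℝ) [IsFiniteMeasure ν] (n : ℕ) :
    ‖∫ t, exp (t * I) ^ n ∂ν‖ ≤ ν.real univ := by
  simpa using norm_integral_le_of_norm_le_const (μ := ν) (C := 1)
    (ae_of_all _ fun t => by rw [norm_pow, norm_exp_ofReal_mul_I, one_pow])

lemma MemPm.norm_coeff_le {m : ℝ} {q : ℂ → ℂ} (hq : MemPm m q) {a : ℕ → ℂ}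
    (ha : ∀ z ∈ unitDisk, HasSum (fun n => a n * z ^ n) (q z)) (n : ℕ) : ‖a n‖ ≤ m := by
  obtain ⟨-, -, μp, μn, _, _, -, hvar, hrep⟩ := hq
  set T := Icc 0 (2 * Real.pi)
  have hcoeff : a = fun n => kernelCoeff n *
      ((∫ t in T, exp (t * I) ^ n ∂μp) - ∫ t in T, exp (t * I) ^ n ∂μn) := by
    refine coeff_unique_of_hasSum one_pos ha fun z hz => ?_
    have hz' : ‖z‖ < 1 := mem_ball_zero_iff.mp hz
    rw [hrep z hz]
    simpa only [mul_sub, sub_mul] using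
      (hasSum_integral_pmKernel _ hz').sub (hasSum_integral_pmKernel _ hz')
  have hμ : ∀ ν : Measure ℝ, [IsFiniteMeasure ν] →
      ‖∫ t in T, exp (t * I) ^ n ∂ν‖ ≤ (ν T).toReal := fun ν _ => by
    simpa [measureReal_def] using norm_integral_exp_mul_I_pow_le (ν.restrict T) n
  calc ‖a n‖ ≤ 2 * ((μp T).toReal + (μn T).toReal) := by
        rw [hcoeff, norm_mul]
        gcongr
        · exact norm_kernelCoeff_le n
        · exact (norm_sub_le _ _).trans (add_le_add (hμ μp) (hμ μn))
    _ ≤ m := by linarith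

lemma norm_brCoeff_le {m : ℝ} {f k : ℂ → ℂ}
    (hs : ∀ z ∈ unitDisk, Summable fun n => brCoeff f k n * z ^ n)
    (hP : MemPmBeta m 0 (brFun f k)) (n : ℕ) : ‖brCoeff f k n‖ ≤ m := by
  obtain ⟨q, hq, hpq⟩ := hP
  refine hq.norm_coeff_le (fun z hz => ?_) n
  convert (hs z hz).hasSum using 1
  simpa [brFun] using (hpq z hz).symm

lemma eventually_eq_zero_of_hasDerivAt_of_eventually_const {𝕜 F : Type*}
    [NontriviallyNormedField 𝕜] [NormedAddCommGroup F] [NormedSpace 𝕜 F]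
    {φ ψ : 𝕜 → F} {c : F} {x : 𝕜}
    (hφ : ∀ᶠ z in 𝓝 x, φ z = c) (hψ : ∀ᶠ z in 𝓝 x, HasDerivAt φ (ψ z) z) :
    ∀ᶠ z in 𝓝 x, ψ z = 0 := by
  filter_upwards [hφ.eventually_nhds, hψ] with z hφz hψz
  exact hψz.unique ((hasDerivAt_const z c).congr_of_eventuallyEq hφz)

lemma deriv_relations_of_comp_eq_id {f g : ℂ → ℂ} {x : ℂ}
    (hf : AnalyticAt ℂ f (g x)) (hg : AnalyticAt ℂ g x) (hfg : ∀ᶠ z in 𝓝 x, f (g z) = z) :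
    deriv f (g x) * deriv g x = 1 ∧
    deriv^[2] f (g x) * deriv g x ^ 2 + deriv f (g x) * deriv^[2] g x = 0 ∧
    deriv^[3] f (g x) * deriv g x ^ 3 + 3 * deriv^[2] f (g x) * deriv g x * deriv^[2] g x +
      deriv f (g x) * deriv^[3] g x = 0 := by
  have hfe : ∀ᶠ z in 𝓝 x, AnalyticAt ℂ f (g z) :=
    hg.continuousAt.tendsto.eventually hf.eventually_analyticAt
  have hge : ∀ᶠ z in 𝓝 x, AnalyticAt ℂ g z := hg.eventually_analyticAt
  have chain {u : ℂ → ℂ} {z : ℂ} (hu : AnalyticAt ℂ u (g z)) (hgz : AnalyticAt ℂ g z) :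
      HasDerivAt (fun y => u (g y)) (deriv u (g z) * deriv g z) z :=
    hu.differentiableAt.hasDerivAt.comp z hgz.differentiableAt.hasDerivAt
  have e1 : ∀ᶠ z in 𝓝 x, deriv f (g z) * deriv g z - 1 = 0 :=
    eventually_eq_zero_of_hasDerivAt_of_eventually_const (φ := fun z => f (g z) - z) (c := 0)
      (by filter_upwards [hfg] with z hz using sub_eq_zero.mpr hz)
      (by filter_upwards [hfe, hge] with z hfz hgz using (chain hfz hgz).sub (hasDerivAt_id z))
  have e2 : ∀ᶠ z in 𝓝 x, deriv (deriv f) (g z) * deriv g z * deriv g z +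
      deriv f (g z) * deriv (deriv g) z = 0 :=
    eventually_eq_zero_of_hasDerivAt_of_eventually_const
      (φ := fun z => deriv f (g z) * deriv g z) (c := 1)
      (by filter_upwards [e1] with z hz using sub_eq_zero.mp hz)
      (by
        filter_upwards [hfe, hge] with z hfz hgz
        exact (chain hfz.deriv hgz).mul hgz.deriv.differentiableAt.hasDerivAt)
  have e3 : ∀ᶠ z in 𝓝 x,
      (deriv (deriv (deriv f)) (g z) * deriv g z * deriv g z +
        deriv (deriv f) (g z) * deriv (deriv g) z) * deriv g z +
      deriv (deriv f) (g z) * deriv g z * deriv (deriv g) z +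
      (deriv (deriv f) (g z) * deriv g z * deriv (deriv g) z +
        deriv f (g z) * deriv (deriv (deriv g)) z) = 0 :=
    eventually_eq_zero_of_hasDerivAt_of_eventually_const (c := 0) e2
      (by
        filter_upwards [hfe, hge] with z hfz hgz
        have hg1 := hgz.deriv.differentiableAt.hasDerivAt
        exact (((chain hfz.deriv.deriv hgz).mul hg1).mul hg1).add
          ((chain hfz.deriv hgz).mul hgz.deriv.deriv.differentiableAt.hasDerivAt))
  simp only [Function.iterate_succ, Function.iterate_zero, Function.comp_apply, id]
  exact ⟨by linear_combination e1.self_of_nhds, by linear_combination e2.self_of_nhds,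
    by linear_combination e3.self_of_nhds⟩

lemma BiUnivalentPair.mc_inverse {f g : ℂ → ℂ} (h : BiUnivalentPair f g) :
    mc g 2 = -mc f 2 ∧ mc g 3 = 2 * mc f 2 ^ 2 - mc f 3 := by
  obtain ⟨hfA, hf0, hf'0, -, hgA, -, hg0, hfg⟩ := h
  have h0 : (0 : ℂ) ∈ unitDisk := mem_ball_self one_pos
  have hfg' : ∀ᶠ w in 𝓝 0, f (g w) = w := by
    filter_upwards [ball_mem_nhds (0 : ℂ) (by norm_num : (0 : ℝ) < 1 / 4)] with w hw
    exact hfg w (mem_ball_zero_iff.mp hw)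
  obtain ⟨e1, e2, e3⟩ := deriv_relations_of_comp_eq_id (hfA (g 0) (by rwa [hg0])) (hgA 0 h0) hfg'
  rw [hg0, hf'0, one_mul] at e1
  rw [hg0, hf'0, e1] at e2 e3
  simp only [mc, iteratedDeriv_eq_iterate, Nat.factorial]
  constructor
  · linear_combination e2 / 2
  · linear_combination e3 / 6 - e2 * deriv^[2] f 0 / 2

theorem BR_beta_zero_bounds_general (m : ℝ)
    (k f g : ℂ → ℂ)
    (hk2 : mc k 2 ≠ 0) (hk3 : mc k 3 ≠ 0)
    (hf : MemBR m 0 k f g) :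
    ‖mc f 2‖ ≤
        min (Real.sqrt (m / ‖mc k 3‖)) (m / ‖mc k 2‖) ∧
      ‖mc f 3‖ ≤ m / ‖mc k 3‖ ∧
      ‖2 * mc f 2 ^ 2 - mc f 3‖ ≤ m / ‖mc k 3‖ := by
  obtain ⟨hfg, hsf, hsg, hPf, hPg⟩ := hf
  have ha₂ : ‖mc f 2‖ * ‖mc k 2‖ ≤ m := by simpa [brCoeff] using norm_brCoeff_le hsf hPf 1
  have ha₃ : ‖mc f 3‖ * ‖mc k 3‖ ≤ m := by simpa [brCoeff] using norm_brCoeff_le hsf hPf 2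
  have hb₃ : ‖2 * mc f 2 ^ 2 - mc f 3‖ * ‖mc k 3‖ ≤ m := by
    simpa [brCoeff, hfg.mc_inverse.2] using norm_brCoeff_le hsg hPg 2
  have hk₂ := norm_pos_iff.mpr hk2
  have hk₃ := norm_pos_iff.mpr hk3
  have ha₃' : ‖mc f 3‖ ≤ m / ‖mc k 3‖ := (le_div_iff₀ hk₃).mpr ha₃
  have hb₃' : ‖2 * mc f 2 ^ 2 - mc f 3‖ ≤ m / ‖mc k 3‖ := (le_div_iff₀ hk₃).mpr hb₃
  have ha₂_sq : ‖mc f 2‖ ^ 2 ≤ m / ‖mc k 3‖ := by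
    have h : 2 * ‖mc f 2‖ ^ 2 = ‖mc f 3 + (2 * mc f 2 ^ 2 - mc f 3)‖ := by simp
    linarith [norm_add_le (mc f 3) (2 * mc f 2 ^ 2 - mc f 3)]
  exact ⟨le_min (Real.le_sqrt_of_sq_le ha₂_sq) ((le_div_iff₀ hk₂).mpr ha₂), ha₃', hb₃'⟩

/-- Corollary 2.1: the case `β = 0` of Theorem 2.1. -/
theorem BR_beta_zero_bounds (m : ℝ) (hm : 2 ≤ m)
    (k kinv f g : ℂ → ℂ) (hk : BiUnivalentPair k kinv)
    (hk2 : mc k 2 ≠ 0) (hk3 : mc k 3 ≠ 0)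
    (hf : MemBR m 0 k f g) :
    ‖mc f 2‖ ≤
        min (Real.sqrt (m / ‖mc k 3‖)) (m / ‖mc k 2‖) ∧
      ‖mc f 3‖ ≤ m / ‖mc k 3‖ ∧
      ‖2 * mc f 2 ^ 2 - mc f 3‖ ≤ m / ‖mc k 3‖ :=
  BR_beta_zero_bounds_general m k f g hk2 hk3 hf
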